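/- arXiv:gr-qc/0004045 — 2 statements merged into one kernel-verified Lean document; each statement's English description precedes it below -/
import Mathlib

section
/- Fix integers n ≥ 1 and N ≥ 1. Write A for the set of multi-indices α : {1,…,n} → {1,…,N} and M ⊆ A for the subset of nondecreasing multi-indices. For y : M → ℝ define its symmetric extension ŷ : A → ℝ by ŷ(α) = y(α↑), where α↑ denotes the nondecreasing rearrangement of α. Then for every J : A → ℝ one has the identity of real numbers [∫_{ℝ^M} exp(−(1/2)·Σ_{α∈A} ŷ(α)² + Σ_{α∈A} ŷ(α)·J(α)) dy] / [∫_{ℝ^M} exp(−(1/2)·Σ_{α∈A} ŷ(α)²) dy] = exp((1/2)·Σ_{α,β∈A} J(α)·G(α,β)·J(β)), where both integrals are with respect to Lebesgue measure on the finite-dimensional space ℝ^M, and G(α,β) = (1/n!)·Σ_{τ ∈ Sym({1,…,n})} ∏_{i=1}^{n} 𝟙[α(τ(i)) = β(i)] (𝟙 denoting the indicator taking value 1 when the equality holds and 0 otherwise). -/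
/-!
Write `c m` for the number of multi-indices whose nondecreasing rearrangement is `m`, and `K m`
for the sum of `J` over them. Since `ŷ` is constant on these fibres, the exponent is the diagonal
form `-(1/2) Σₘ c m · y m² + Σₘ K m · y m`, so both integrals factor into one-dimensional
Gaussians and completing the square gives the ratio `exp ((1/2) Σₘ K m² / c m)`. On the other
side, `α ∘ τ = β` has either no solution `τ` or as many as the stabilizer of `α` has elements, so
orbit–stabilizer gives `G α β = [α↑ = β↑] / c α↑`, and `J G J` collapses to the same sum.
-/

open MeasureTheory
open scoped Classical

noncomputable section

/-- The nondecreasing rearrangement of a multi-index `α : Fin n → Fin N`, as an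
element of the set of nondecreasing multi-indices. -/
def sortedIdx {n N : ℕ} (α : Fin n → Fin N) : {α : Fin n → Fin N // Monotone α} :=
  ⟨α ∘ Tuple.sort α, Tuple.monotone_sort α⟩

/-- The symmetric extension of `y`, defined on nondecreasing multi-indices, to all
multi-indices: `ŷ(α) = y(α↑)`. -/
def symExt {n N : ℕ} (y : {α : Fin n → Fin N // Monotone α} → ℝ)
    (α : Fin n → Fin N) : ℝ :=
  y (sortedIdx α)

/-- The fully symmetrized propagator
`G(α,β) = (1/n!) · Σ_{τ ∈ Sₙ} ∏ᵢ 𝟙[α(τ(i)) = β(i)]`. -/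
def symProp {n N : ℕ} (α β : Fin n → Fin N) : ℝ :=
  (1 / (n.factorial : ℝ)) *
    ∑ τ : Equiv.Perm (Fin n), ∏ i : Fin n, if α (τ i) = β i then (1 : ℝ) else 0

open Finset Real

section PermutationCount

variable {ι X : Type*} [Fintype ι] [DecidableEq ι] [DecidableEq X]

lemma card_filter_comp_eq_of_comp_eq {f g : ι → X} {τ₀ : Equiv.Perm ι} (h : f ∘ τ₀ = g) :
    #{τ : Equiv.Perm ι | f ∘ τ = g} = #{τ : Equiv.Perm ι | f ∘ τ = f} := by
  subst h
  refine (card_equiv (Equiv.mulRight τ₀) fun τ => ?_).symm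
  simp only [mem_filter, mem_univ, true_and, Equiv.coe_mulRight, Equiv.Perm.coe_mul,
    ← Function.comp_assoc]
  exact τ₀.surjective.injective_comp_right.eq_iff.symm

lemma card_stabilizer_mul_card_orbit [Fintype X] (f : ι → X) :
    #{τ : Equiv.Perm ι | f ∘ τ = f} * #{g : ι → X | ∃ τ : Equiv.Perm ι, f ∘ τ = g} =
      (Fintype.card ι).factorial := by
  have hfiber := card_eq_sum_card_fiberwise (s := univ)
    (t := {g | ∃ τ : Equiv.Perm ι, f ∘ τ = g}) (f := fun τ : Equiv.Perm ι => f ∘ τ)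
    (fun τ _ => by simp)
  rw [card_univ, Fintype.card_perm,
    sum_const_nat (m := #{τ : Equiv.Perm ι | f ∘ τ = f})] at hfiber
  · rw [hfiber, mul_comm]
  · intro g hg
    obtain ⟨τ₀, hτ₀⟩ := (mem_filter.mp hg).2
    exact card_filter_comp_eq_of_comp_eq hτ₀

end PermutationCount

section Sorting

variable {n N : ℕ}

lemma sortedIdx_of_monotone (m : {α : Fin n → Fin N // Monotone α}) :
    sortedIdx m.val = m :=
  Subtype.ext (by simp [sortedIdx, Tuple.sort_eq_refl_iff_monotone.mpr m.2])

lemma sortedIdx_comp_perm (α : Fin n → Fin N) (τ : Equiv.Perm (Fin n)) :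
    sortedIdx (α ∘ τ) = sortedIdx α :=
  Subtype.ext Tuple.comp_perm_comp_sort_eq_comp_sort

lemma sortedIdx_eq_iff (α β : Fin n → Fin N) :
    sortedIdx α = sortedIdx β ↔ ∃ τ : Equiv.Perm (Fin n), α ∘ τ = β := by
  constructor
  · intro h
    have h' : α ∘ Tuple.sort α = β ∘ Tuple.sort β := congrArg Subtype.val h
    refine ⟨(Tuple.sort β).symm.trans (Tuple.sort α), funext fun i => ?_⟩
    simpa using congrFun h' ((Tuple.sort β).symm i)
  · rintro ⟨τ, rfl⟩
    exact (sortedIdx_comp_perm α τ).symm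

def sortedFiberCard (m : {α : Fin n → Fin N // Monotone α}) : ℕ :=
  #{α | sortedIdx α = m}

lemma sortedFiberCard_pos (m : {α : Fin n → Fin N // Monotone α}) : 0 < sortedFiberCard m :=
  card_pos.mpr ⟨m.val, by simp [sortedIdx_of_monotone]⟩

lemma symProp_eq (α β : Fin n → Fin N) :
    symProp α β =
      if sortedIdx α = sortedIdx β then (sortedFiberCard (sortedIdx α) : ℝ)⁻¹ else 0 := by
  have hcount : (∑ τ : Equiv.Perm (Fin n), ∏ i, if α (τ i) = β i then (1 : ℝ) else 0) =
      #{τ : Equiv.Perm (Fin n) | α ∘ τ = β} := by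
    simp only [Fintype.prod_boole, ← funext_iff, sum_boole]
    rfl
  have horbit : sortedFiberCard (sortedIdx α) = #{γ | ∃ τ : Equiv.Perm (Fin n), α ∘ τ = γ} :=
    congrArg card (filter_congr fun γ _ => by rw [eq_comm, sortedIdx_eq_iff])
  rw [symProp, hcount]
  split_ifs with h
  · obtain ⟨τ₀, hτ₀⟩ := (sortedIdx_eq_iff α β).mp h
    have hprod := card_stabilizer_mul_card_orbit α
    rw [Fintype.card_fin] at hprod
    have hstab : (0 : ℝ) < #{τ : Equiv.Perm (Fin n) | α ∘ τ = α} := by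
      exact_mod_cast card_pos.mpr ⟨1, by simp⟩
    rw [card_filter_comp_eq_of_comp_eq hτ₀, horbit, ← hprod, Nat.cast_mul]
    field_simp
  · rw [card_eq_zero.mpr (filter_eq_empty_iff.mpr fun τ _ hτ =>
      h ((sortedIdx_eq_iff α β).mpr ⟨τ, hτ⟩))]
    simp

end Sorting

section Fiberwise

variable {A M : Type*} [Fintype A] [Fintype M] [DecidableEq M] (p : A → M)

lemma sum_comp_eq_sum_card_fiber_mul (f : M → ℝ) :
    ∑ a, f (p a) = ∑ m, #{a | p a = m} * f m := by
  rw [← sum_fiberwise' univ p f]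
  simp only [sum_const, nsmul_eq_mul]

lemma sum_comp_mul_eq_sum_fiber_sum_mul (f : M → ℝ) (J : A → ℝ) :
    ∑ a, f (p a) * J a = ∑ m, (∑ a with p a = m, J a) * f m := by
  rw [← sum_fiberwise univ p]
  refine sum_congr rfl fun m _ => ?_
  rw [sum_mul]
  exact sum_congr rfl fun a ha => by rw [(mem_filter.mp ha).2, mul_comm]

lemma sum_sum_mul_ite_fiber_mul (w : M → ℝ) (J : A → ℝ) :
    ∑ a, ∑ b, J a * (if p a = p b then w (p a) else 0) * J b =
      ∑ m, w m * (∑ a with p a = m, J a) ^ 2 := by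
  have hinner : ∀ a, ∑ b, J a * (if p a = p b then w (p a) else 0) * J b =
      w (p a) * (∑ b with p b = p a, J b) * J a := fun a => by
    rw [mul_sum, sum_mul, sum_filter]
    refine sum_congr rfl fun b _ => ?_
    by_cases h : p b = p a
    · simp only [h, if_true]
      ring
    · simp only [h, Ne.symm h, if_false]
      ring
  simp_rw [hinner, sum_comp_mul_eq_sum_fiber_sum_mul p (fun m => w m * ∑ b with p b = m, J b)]
  exact sum_congr rfl fun m _ => by ring

end Fiberwise

section Gaussian

lemma integral_exp_neg_mul_sq_add_mul {c : ℝ} (hc : c ≠ 0) (K : ℝ) :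
    ∫ t : ℝ, exp (-(1 / 2) * c * t ^ 2 + K * t) =
      exp (K ^ 2 / (2 * c)) * ∫ t : ℝ, exp (-(1 / 2) * c * t ^ 2) := by
  have hsquare : ∀ t : ℝ, -(1 / 2) * c * t ^ 2 + K * t =
      -(1 / 2) * c * (t - K / c) ^ 2 + K ^ 2 / (2 * c) := fun t => by
    field_simp
    ring
  simp_rw [hsquare, exp_add]
  rw [integral_mul_const, integral_sub_right_eq_self (fun t => exp (-(1 / 2) * c * t ^ 2)),
    mul_comm]

lemma integral_exp_neg_mul_sq_pos {c : ℝ} (hc : 0 < c) :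
    0 < ∫ t : ℝ, exp (-(1 / 2) * c * t ^ 2) := by
  have hrewrite : ∀ t : ℝ, -(1 / 2) * c * t ^ 2 = -(c / 2) * t ^ 2 := fun t => by ring
  simp_rw [hrewrite, integral_gaussian]
  positivity

theorem integral_exp_diag_quadratic_add_linear_div {ι : Type*} [Fintype ι] {c : ι → ℝ}
    (hc : ∀ i, 0 < c i) (K : ι → ℝ) :
    (∫ y : ι → ℝ, exp (-(1 / 2) * ∑ i, c i * y i ^ 2 + ∑ i, K i * y i)) /
        (∫ y : ι → ℝ, exp (-(1 / 2) * ∑ i, c i * y i ^ 2)) =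
      exp ((1 / 2) * ∑ i, K i ^ 2 / c i) := by
  have hsplit : ∀ y : ι → ℝ, -(1 / 2) * ∑ i, c i * y i ^ 2 + ∑ i, K i * y i =
      ∑ i, (-(1 / 2) * c i * y i ^ 2 + K i * y i) := fun y => by
    simp only [mul_sum, ← sum_add_distrib, mul_assoc]
  have hsplit₀ : ∀ y : ι → ℝ, -(1 / 2) * ∑ i, c i * y i ^ 2 = ∑ i, -(1 / 2) * c i * y i ^ 2 :=
    fun y => by simp only [mul_sum, mul_assoc]
  simp_rw [hsplit, hsplit₀, exp_sum]
  rw [integral_fintype_prod_volume_eq_prod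
      (f := fun i t => exp (-(1 / 2) * c i * t ^ 2 + K i * t)),
    integral_fintype_prod_volume_eq_prod (f := fun i t => exp (-(1 / 2) * c i * t ^ 2))]
  simp_rw [integral_exp_neg_mul_sq_add_mul (hc _).ne']
  rw [prod_mul_distrib, mul_div_assoc,
    div_self (prod_pos fun i _ => integral_exp_neg_mul_sq_pos (hc i)).ne', mul_one, ← exp_sum,
    mul_sum]
  exact congrArg exp (sum_congr rfl fun i _ => by ring)

end Gaussian

theorem real_free_partition_function_general (n N : ℕ)
    (J : (Fin n → Fin N) → ℝ) :
    (∫ y : {α : Fin n → Fin N // Monotone α} → ℝ,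
        Real.exp (-(1/2) * ∑ α : Fin n → Fin N, (symExt y α) ^ 2
          + ∑ α : Fin n → Fin N, symExt y α * J α)) /
    (∫ y : {α : Fin n → Fin N // Monotone α} → ℝ,
        Real.exp (-(1/2) * ∑ α : Fin n → Fin N, (symExt y α) ^ 2)) =
    Real.exp ((1/2) * ∑ α : Fin n → Fin N, ∑ β : Fin n → Fin N,
        J α * symProp α β * J β) := by
  have hc : ∀ m : {α : Fin n → Fin N // Monotone α}, (0 : ℝ) < sortedFiberCard m :=
    fun m => mod_cast sortedFiberCard_pos m
  have hquad : ∀ y : {α : Fin n → Fin N // Monotone α} → ℝ,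
      ∑ α, symExt y α ^ 2 = ∑ m, (sortedFiberCard m : ℝ) * y m ^ 2 := fun y =>
    sum_comp_eq_sum_card_fiber_mul sortedIdx (fun m => y m ^ 2)
  have hlin : ∀ y : {α : Fin n → Fin N // Monotone α} → ℝ,
      ∑ α, symExt y α * J α = ∑ m, (∑ α with sortedIdx α = m, J α) * y m :=
    fun y => sum_comp_mul_eq_sum_fiber_sum_mul sortedIdx y J
  have hprop : ∑ α, ∑ β, J α * symProp α β * J β =
      ∑ m, (∑ α with sortedIdx α = m, J α) ^ 2 / sortedFiberCard m := by
    simp_rw [symProp_eq,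
      sum_sum_mul_ite_fiber_mul sortedIdx (fun m => (sortedFiberCard m : ℝ)⁻¹)]
    exact sum_congr rfl fun m _ => by ring
  simp_rw [hquad, hlin, integral_exp_diag_quadratic_add_linear_div hc, hprop]

/-- Real case of Proposition 1 (GM:rel): the free partition function of the rank-`n`
generalized matrix model with real fully symmetric tensor field, in presence of a
source `J`, equals `exp((1/2)·J G J)` with the fully symmetrized propagator `G`. -/
theorem real_free_partition_function (n N : ℕ) (hn : 1 ≤ n) (hN : 1 ≤ N)
    (J : (Fin n → Fin N) → ℝ) :
    (∫ y : {α : Fin n → Fin N // Monotone α} → ℝ,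
        Real.exp (-(1/2) * ∑ α : Fin n → Fin N, (symExt y α) ^ 2
          + ∑ α : Fin n → Fin N, symExt y α * J α)) /
    (∫ y : {α : Fin n → Fin N // Monotone α} → ℝ,
        Real.exp (-(1/2) * ∑ α : Fin n → Fin N, (symExt y α) ^ 2)) =
    Real.exp ((1/2) * ∑ α : Fin n → Fin N, ∑ β : Fin n → Fin N,
        J α * symProp α β * J β) :=
  real_free_partition_function_general n N J
end
end

section
/- Let n = 3. A glueing datum of dimension n consists of: a finite nonempty index set I (indexing copies Δ_i of the standard n-simplex, realized as {x : {0,…,n} → [0,∞) | Σ_v x_v = 1}, with vertices labeled 0,…,n); a fixed-point-free involution P of the set I × {0,…,n} of codimension-1 faces, where (i,k) denotes the face {x ∈ Δ_i | x_k = 0}; and, for each face (i,k) with P(i,k) = (j,l), a bijection φ_{(i,k)} : {0,…,n}∖{k} → {0,…,n}∖{l}, subject to φ_{(j,l)} = φ_{(i,k)}⁻¹. Suppose condition Ori holds: there exists ε : I → {+1,−1} such that for every face (i,k) with P(i,k) = (j,l) one has ε(i)·(−1)^k·sgn(φ_{(i,k)}) = −ε(j)·(−1)^l, where sgn(φ_{(i,k)})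 is the signature of the permutation of {1,…,n} obtained by conjugating φ_{(i,k)} with the order-preserving bijections {0,…,n}∖{k} → {1,…,n} and {0,…,n}∖{l} → {1,…,n}. Then condition Dir holds: there exist relations o_i on {0,…,n} (one for each i ∈ I) such that for all a ≠ b exactly one of o_i(a,b), o_i(b,a) holds, and for every face (i,k) with P(i,k) = (j,l) and all a, b ∈ {0,…,n}∖{k} with a ≠ b one has o_i(a,b) ↔ o_j(φ_{(i,k)}(a), φ_{(i,k)}(b)). -/
open scoped Classical

noncomputable section

/-- A glueing datum of dimension `n`: a finite nonempty set `I` indexing copies of the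
standard `n`-simplex, a fixed-point-free involution `P` of the set `I × Fin (n+1)` of
codimension-1 faces (the face `(i,k)` of the `i`-th simplex being opposite to the vertex
`k`), and for each face `(i,k)` with `P (i,k) = (j,l)` a simplicial identification,
encoded as a permutation `glue (i,k)` of the vertex labels sending `k` to `l` (its
restriction to `{0,…,n} \ {k}` is the bijection `φ_{(i,k)}` onto `{0,…,n} \ {l}`),
subject to `φ_{P f} = (φ f)⁻¹`. -/
structure GlueingDatum (n : ℕ) where
  I : Type
  fintypeI : Fintype I
  nonemptyI : Nonempty I
  P : I × Fin (n + 1) → I × Fin (n + 1)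
  P_involutive : ∀ f, P (P f) = f
  P_fixedPointFree : ∀ f, P f ≠ f
  glue : I × Fin (n + 1) → Equiv.Perm (Fin (n + 1))
  glue_face : ∀ f, glue f f.2 = (P f).2
  glue_symm : ∀ f, glue (P f) = (glue f).symm

/-- The permutation of `Fin n` obtained from a permutation `e` of `Fin (n+1)` by
deleting `k` from the source and `e k` from the target, conjugating by the
order-preserving bijections `{0,…,n} \ {k} ≃ {1,…,n}` and `{0,…,n} \ {e k} ≃ {1,…,n}`. -/
def restrictPerm {n : ℕ} (e : Equiv.Perm (Fin (n + 1))) (k : Fin (n + 1)) :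
    Equiv.Perm (Fin n) :=
  (finSuccAboveEquiv k).trans
    ((e.subtypeEquiv (fun _ => (not_congr e.apply_eq_iff_eq).symm)).trans
      (finSuccAboveEquiv (e k)).symm)

/-- The signature of the face-pairing `e` at the face opposite to `k`. -/
def glueSign {n : ℕ} (e : Equiv.Perm (Fin (n + 1))) (k : Fin (n + 1)) : ℤˣ :=
  Equiv.Perm.sign (restrictPerm e k)

/-- Condition Ori: the simplices can be given signs so that every face-pairing
reverses the induced orientation. -/
def Ori {n : ℕ} (D : GlueingDatum n) : Prop :=
  ∃ ε : D.I → ℤˣ, ∀ (i : D.I) (k : Fin (n + 1)),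
    ε i * (-1) ^ (k : ℕ) * glueSign (D.glue (i, k)) k
      = -(ε (D.P (i, k)).1 * (-1) ^ (((D.P (i, k)).2 : Fin (n + 1)) : ℕ))

/-- Condition Dir: the edges of the simplices can be directed compatibly with all the
face-pairings. -/
def Dir {n : ℕ} (D : GlueingDatum n) : Prop :=
  ∃ o : D.I → Fin (n + 1) → Fin (n + 1) → Prop,
    (∀ i a b, a ≠ b → Xor' (o i a b) (o i b a)) ∧
    (∀ (i : D.I) (k a b : Fin (n + 1)), a ≠ k → b ≠ k → a ≠ b →
      (o i a b ↔ o (D.P (i, k)).1 (D.glue (i, k) a) (D.glue (i, k) b)))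

/-!
Work with flags `(i, π)`: a simplex with an ordering `π 0, …, π 3` of its vertices, read as the
directed edge `π 0 → π 1` together with the face opposite `π 3` containing it. Crossing that face
and exchanging `π 2, π 3` are involutions generating a dihedral group whose orbits describe how
directed edges get identified; reversing the edge commutes with both. The sign `ε i * sign π`
changes under each of the three moves (for crossing, this is Ori), so no even word reverses an
edge. An odd word is conjugate to a generator, and a generator reversing an edge would glue a
face to itself. So no orbit contains a flag together with its reversal, and picking one orbit
out of each such pair directs all edges coherently.
-/

open Equiv

section DihedralAction

variable {G : Type*} [Group G]

theorem exists_zpow_of_mem_closure_pair {s₁ s₂ g : G} (h₁ : s₁ * s₁ = 1) (h₂ : s₂ * s₂ = 1)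
    (hg : g ∈ Subgroup.closure {s₁, s₂}) :
    ∃ n : ℤ, g = (s₁ * s₂) ^ n ∨ g = (s₁ * s₂) ^ n * s₂ := by
  have hs₁ : s₁⁻¹ = s₁ := inv_eq_of_mul_eq_one_right h₁
  have hs₂ : s₂⁻¹ = s₂ := inv_eq_of_mul_eq_one_right h₂
  have hconj (n : ℤ) : s₂ * (s₁ * s₂) ^ n = (s₁ * s₂) ^ (-n) * s₂ := by
    have : SemiconjBy s₂ (s₁ * s₂) (s₁ * s₂)⁻¹ := by
      simp only [SemiconjBy, mul_inv_rev, hs₁, hs₂, ← mul_assoc]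
    rw [zpow_neg, ← inv_zpow]
    exact (this.zpow_right n).eq
  induction hg using Subgroup.closure_induction with
  | mem x hx =>
    rcases hx with rfl | rfl
    · exact ⟨1, Or.inr (by rw [zpow_one, mul_assoc, h₂, mul_one])⟩
    · exact ⟨0, Or.inr (by rw [zpow_zero, one_mul])⟩
  | one => exact ⟨0, Or.inl (zpow_zero _).symm⟩
  | mul x y _ _ hx hy =>
    obtain ⟨m, rfl | rfl⟩ := hx <;> obtain ⟨n, rfl | rfl⟩ := hy
    · exact ⟨m + n, Or.inl (zpow_add _ m n).symm⟩
    · exact ⟨m + n, Or.inr (by rw [zpow_add, mul_assoc])⟩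
    · exact ⟨m - n, Or.inr (by rw [mul_assoc, hconj, ← mul_assoc, ← zpow_add, sub_eq_add_neg])⟩
    · refine ⟨m - n, Or.inl ?_⟩
      rw [mul_assoc, ← mul_assoc s₂, hconj, mul_assoc, h₂, mul_one, ← zpow_add, sub_eq_add_neg]
  | inv x _ hx =>
    obtain ⟨m, rfl | rfl⟩ := hx
    · exact ⟨-m, Or.inl (zpow_neg _ m).symm⟩
    · exact ⟨m, Or.inr (by rw [mul_inv_rev, hs₂, ← zpow_neg, hconj, neg_neg])⟩

variable {X : Type*} [MulAction G X]

theorem zpow_smul_ne_smul_of_mul_eq_inv_mul {t J : G} (hJ : J * t = t⁻¹ * J)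
    (hfix : ∀ y : X, J • y ≠ y) (hstep : ∀ y : X, J • y ≠ t • y) (n : ℤ) (x : X) :
    t ^ n • x ≠ J • x := by
  have hJn (m : ℤ) : J * t ^ m = t ^ (-m) * J := by
    rw [zpow_neg, ← inv_zpow]
    exact ((show SemiconjBy J t t⁻¹ from hJ).zpow_right m).eq
  intro h
  -- `J` reflects the `t`-orbit of `x` about the midpoint of `x` and `t ^ n • x`.
  obtain ⟨m, rfl | rfl⟩ := Int.even_or_odd' n
  · apply hfix (t ^ m • x)
    rw [smul_smul, hJn, mul_smul, ← h, smul_smul, ← zpow_add]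
    congr 2; ring
  · apply hstep (t ^ m • x)
    rw [smul_smul, hJn, mul_smul, ← h, smul_smul, smul_smul, ← zpow_add, ← zpow_one_add]
    congr 2; ring

theorem map_zpow_smul_of_map_smul {β : Type*} {t : G} {f : X → β} (hf : ∀ x, f (t • x) = f x)
    (n : ℤ) (x : X) : f (t ^ n • x) = f x := by
  induction n using Int.induction_on generalizing x with
  | zero => rw [zpow_zero, one_smul]
  | succ n ih => rw [zpow_add_one, mul_smul, ih, hf]
  | pred n ih => rw [zpow_sub_one, mul_smul, ih, ← hf (t⁻¹ • x), smul_inv_smul]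

theorem smul_ne_smul_of_mem_closure_pair {s₁ s₂ r : G} (h₁ : s₁ * s₁ = 1) (h₂ : s₂ * s₂ = 1)
    (hr₁ : Commute r s₁) (hr₂ : Commute r s₂) (σ : X → ℤˣ)
    (hσ₁ : ∀ x : X, σ (s₁ • x) = -σ x) (hσ₂ : ∀ x : X, σ (s₂ • x) = -σ x)
    (hσr : ∀ x : X, σ (r • x) = -σ x)
    (hne₁ : ∀ x : X, r • x ≠ s₁ • x) (hne₂ : ∀ x : X, r • x ≠ s₂ • x)
    {g : G} (hg : g ∈ Subgroup.closure {s₁, s₂}) (x : X) : g • x ≠ r • x := by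
  obtain ⟨n, rfl | rfl⟩ := exists_zpow_of_mem_closure_pair h₁ h₂ hg
  · intro h
    have hσt (y : X) : σ ((s₁ * s₂) • y) = σ y := by rw [mul_smul, hσ₁, hσ₂, neg_neg]
    have := congrArg σ h
    rw [map_zpow_smul_of_map_smul hσt, hσr] at this
    exact units_ne_neg_self _ this
  · obtain ⟨y, rfl⟩ : ∃ y, x = s₂ • y := ⟨s₂ • x, by rw [smul_smul, h₂, one_smul]⟩
    rw [mul_smul, smul_smul s₂, h₂, one_smul, smul_smul]
    have hJ : r * s₂ * (s₁ * s₂) = (s₁ * s₂)⁻¹ * (r * s₂) := by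
      rw [mul_inv_rev, inv_eq_of_mul_eq_one_right h₁, inv_eq_of_mul_eq_one_right h₂]
      calc r * s₂ * (s₁ * s₂) = r * (s₂ * s₁) * s₂ := by simp only [mul_assoc]
        _ = s₂ * s₁ * r * s₂ := by rw [(hr₂.mul_right hr₁).eq]
        _ = s₂ * s₁ * (r * s₂) := by simp only [mul_assoc]
    refine zpow_smul_ne_smul_of_mul_eq_inv_mul hJ (fun z hz => hne₂ (s₂ • z) ?_)
      (fun z hz => hne₁ (s₂ • z) ?_) n y
    · rwa [smul_smul s₂, h₂, one_smul, ← mul_smul]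
    · rwa [← mul_smul, ← mul_smul]

theorem exists_invariant_of_smul_notMem_orbit (H : Subgroup G) {r : G} (hr : r * r = 1)
    (hcomm : ∀ h ∈ H, Commute r h) (hne : ∀ h ∈ H, ∀ x : X, h • x ≠ r • x) :
    ∃ O : X → Prop, (∀ h ∈ H, ∀ x, O (h • x) ↔ O x) ∧ ∀ x, O (r • x) ↔ ¬O x := by
  let Q := MulAction.orbitRel.Quotient H X
  -- `r` swaps the orbits in pairs; an arbitrary linear order on orbits picks one of each pair.
  let _ : LinearOrder Q := linearOrderOfSTO WellOrderingRel
  let q : X → Q := Quotient.mk _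
  have hq : ∀ h ∈ H, ∀ x, q (h • x) = q x := fun h hh x => Quotient.sound ⟨⟨h, hh⟩, rfl⟩
  refine ⟨fun x => q x < q (r • x), fun h hh x => ?_, fun x => ?_⟩
  · show q (h • x) < q (r • h • x) ↔ q x < q (r • x)
    rw [smul_smul, (hcomm h hh).eq, mul_smul, hq h hh, hq h hh]
  · have hqr : q x ≠ q (r • x) := fun h => by
      obtain ⟨⟨g, hg⟩, hgx⟩ := Quotient.exact h.symm
      exact hne g hg x hgx
    show q (r • x) < q (r • r • x) ↔ ¬q x < q (r • x)
    rw [smul_smul, hr, one_smul]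
    exact ⟨lt_asymm, (lt_or_gt_of_ne hqr).resolve_left⟩

theorem exists_invariant_of_closure_pair {s₁ s₂ r : G} (h₁ : s₁ * s₁ = 1) (h₂ : s₂ * s₂ = 1)
    (hr : r * r = 1) (hr₁ : Commute r s₁) (hr₂ : Commute r s₂) (σ : X → ℤˣ)
    (hσ₁ : ∀ x : X, σ (s₁ • x) = -σ x) (hσ₂ : ∀ x : X, σ (s₂ • x) = -σ x)
    (hσr : ∀ x : X, σ (r • x) = -σ x)
    (hne₁ : ∀ x : X, r • x ≠ s₁ • x) (hne₂ : ∀ x : X, r • x ≠ s₂ • x) :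
    ∃ O : X → Prop, (∀ x, O (s₁ • x) ↔ O x) ∧ (∀ x, O (s₂ • x) ↔ O x) ∧
      ∀ x, O (r • x) ↔ ¬O x := by
  have hcomm : ∀ h ∈ Subgroup.closure {s₁, s₂}, Commute r h := by
    intro h hh
    refine Subgroup.mem_centralizer_iff.mp ?_ r rfl
    refine Subgroup.closure_le _ |>.mpr ?_ hh
    rintro s (rfl | rfl) _ rfl
    exacts [hr₁.eq, hr₂.eq]
  obtain ⟨O, hOH, hOr⟩ := exists_invariant_of_smul_notMem_orbit (Subgroup.closure {s₁, s₂}) hr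
    hcomm (fun _ hg => smul_ne_smul_of_mem_closure_pair h₁ h₂ hr₁ hr₂ σ hσ₁ hσ₂ hσr hne₁ hne₂ hg)
  exact ⟨O, hOH s₁ (Subgroup.subset_closure (by simp)),
    hOH s₂ (Subgroup.subset_closure (by simp)), hOr⟩

end DihedralAction

theorem succAbove_restrictPerm {n : ℕ} (e : Perm (Fin (n + 1))) (k : Fin (n + 1)) (j : Fin n) :
    (e k).succAbove (restrictPerm e k j) = e (k.succAbove j) :=
  congrArg Subtype.val ((finSuccAboveEquiv (e k)).apply_symm_apply _)

theorem cycleRange_mul_mul_cycleRange_symm {n : ℕ} (e : Perm (Fin (n + 1))) (k : Fin (n + 1)) :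
    (e k).cycleRange * e * k.cycleRange.symm = Perm.decomposeFin.symm (0, restrictPerm e k) := by
  ext j : 1
  cases j using Fin.cases with
  | zero => simp
  | succ j =>
    rw [Perm.mul_apply, Perm.mul_apply, Fin.cycleRange_symm_succ, ← succAbove_restrictPerm,
      Fin.cycleRange_succAbove, Perm.decomposeFin_symm_apply_succ, swap_self, refl_apply]

theorem sign_eq_neg_one_pow_mul_glueSign {n : ℕ} (e : Perm (Fin (n + 1))) (k : Fin (n + 1)) :
    Perm.sign e = (-1) ^ (k : ℕ) * (-1) ^ (e k : ℕ) * glueSign e k := by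
  have h := congrArg Perm.sign (cycleRange_mul_mul_cycleRange_symm e k)
  rw [Perm.decomposeFin.symm_sign, if_pos rfl, one_mul, Perm.sign_mul, Perm.sign_mul,
    Perm.sign_symm, Fin.sign_cycleRange, Fin.sign_cycleRange] at h
  rw [glueSign, ← h]
  generalize ((-1) ^ (k : ℕ) : ℤˣ) = a, ((-1) ^ (e k : ℕ) : ℤˣ) = b
  calc Perm.sign e = (a * a) * (b * b) * Perm.sign e := by
        rw [Int.units_mul_self, Int.units_mul_self, one_mul, one_mul]
    _ = a * b * (b * Perm.sign e * a) := by ac_rfl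

namespace GlueingDatum

variable {n : ℕ} (D : GlueingDatum n)

theorem mul_sign_glue_eq_neg {ε : D.I → ℤˣ}
    (hε : ∀ (i : D.I) (k : Fin (n + 1)), ε i * (-1) ^ (k : ℕ) * glueSign (D.glue (i, k)) k
      = -(ε (D.P (i, k)).1 * (-1) ^ (((D.P (i, k)).2 : Fin (n + 1)) : ℕ)))
    (f : D.I × Fin (n + 1)) : ε (D.P f).1 * Perm.sign (D.glue f) = -ε f.1 := by
  have h := hε f.1 f.2
  rw [← D.glue_face f] at h
  rw [sign_eq_neg_one_pow_mul_glueSign _ f.2]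
  generalize ((-1) ^ (f.2 : ℕ) : ℤˣ) = a, ((-1) ^ (D.glue f f.2 : ℕ) : ℤˣ) = b,
    glueSign (D.glue f) f.2 = c at h
  calc ε (D.P f).1 * (a * b * c) = (ε (D.P f).1 * b) * (a * c) := by ac_rfl
    _ = -(ε f.1 * (a * a) * (c * c)) := by
        rw [← neg_eq_iff_eq_neg.mpr h]
        simp only [neg_mul]
        ac_rfl
    _ = -ε f.1 := by rw [Int.units_mul_self, Int.units_mul_self, mul_one, mul_one]

/-- A flag `(i, π)` lists the vertices of the `i`-th simplex in the order `π 0, …, π n`. -/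
abbrev Flag := D.I × Perm (Fin (n + 1))

def crossLastFace (x : D.Flag) : D.Flag :=
  ((D.P (x.1, x.2 (Fin.last n))).1, D.glue (x.1, x.2 (Fin.last n)) * x.2)

theorem crossLastFace_involutive : Function.Involutive D.crossLastFace := by
  rintro ⟨i, π⟩
  set f := (i, π (Fin.last n))
  have hf : ((D.P f).1, (D.glue f * π) (Fin.last n)) = D.P f := Prod.ext rfl (D.glue_face f)
  change ((D.P ((D.P f).1, (D.glue f * π) (Fin.last n))).1,
    D.glue ((D.P f).1, (D.glue f * π) (Fin.last n)) * (D.glue f * π)) = (i, π)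
  rw [hf, D.P_involutive, D.glue_symm, ← mul_assoc, ← Perm.inv_def, inv_mul_cancel, one_mul]

def crossPerm : Perm D.Flag := Function.Involutive.toPerm _ D.crossLastFace_involutive

theorem crossPerm_apply (x : D.Flag) : D.crossPerm x = D.crossLastFace x := rfl

theorem crossPerm_mul_self : D.crossPerm * D.crossPerm = 1 :=
  Equiv.ext D.crossLastFace_involutive

def reorder (τ : Perm (Fin (n + 1))) : Perm D.Flag :=
  Equiv.prodCongr (Equiv.refl D.I) (Equiv.mulRight τ)

theorem reorder_apply (τ : Perm (Fin (n + 1))) (x : D.Flag) : D.reorder τ x = (x.1, x.2 * τ) :=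
  rfl

theorem reorder_mul_reorder (τ τ' : Perm (Fin (n + 1))) :
    D.reorder τ * D.reorder τ' = D.reorder (τ' * τ) :=
  Equiv.ext fun x => by simp [reorder_apply, mul_assoc]

theorem reorder_swap_mul_self (a b : Fin (n + 1)) :
    D.reorder (swap a b) * D.reorder (swap a b) = 1 := by
  rw [reorder_mul_reorder, swap_mul_self]
  rfl

theorem commute_reorder {τ τ' : Perm (Fin (n + 1))} (h : Commute τ τ') :
    Commute (D.reorder τ) (D.reorder τ') := by
  rw [Commute, SemiconjBy, reorder_mul_reorder, reorder_mul_reorder, h.eq]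

theorem reorder_ne_reorder {τ τ' : Perm (Fin (n + 1))} (h : τ ≠ τ') (x : D.Flag) :
    D.reorder τ x ≠ D.reorder τ' x :=
  fun h' => h (mul_left_cancel (congrArg Prod.snd h'))

theorem commute_reorder_crossPerm {τ : Perm (Fin (n + 1))} (hτ : τ (Fin.last n) = Fin.last n) :
    Commute (D.reorder τ) D.crossPerm :=
  Equiv.ext fun x => by simp [crossPerm_apply, reorder_apply, crossLastFace, hτ, mul_assoc]

theorem reorder_ne_crossPerm {τ : Perm (Fin (n + 1))} (hτ : τ (Fin.last n) = Fin.last n)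
    (x : D.Flag) : D.reorder τ x ≠ D.crossPerm x := by
  intro h
  apply D.P_fixedPointFree (x.1, x.2 (Fin.last n))
  refine Prod.ext (congrArg Prod.fst h).symm ?_
  have := congrArg (fun y : D.Flag => y.2 (Fin.last n)) h
  simp only [reorder_apply, crossPerm_apply, crossLastFace, Perm.mul_apply, hτ] at this
  rw [← D.glue_face, ← this]

def orientationSign (ε : D.I → ℤˣ) (x : D.Flag) : ℤˣ := ε x.1 * Perm.sign x.2

theorem orientationSign_reorder_swap (ε : D.I → ℤˣ) {a b : Fin (n + 1)} (hab : a ≠ b)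
    (x : D.Flag) : D.orientationSign ε (D.reorder (swap a b) x) = -D.orientationSign ε x := by
  simp [orientationSign, reorder_apply, Perm.sign_mul, Perm.sign_swap hab]

theorem orientationSign_crossPerm {ε : D.I → ℤˣ}
    (hε : ∀ f, ε (D.P f).1 * Perm.sign (D.glue f) = -ε f.1) (x : D.Flag) :
    D.orientationSign ε (D.crossPerm x) = -D.orientationSign ε x := by
  simp only [orientationSign, crossPerm_apply, crossLastFace, Perm.sign_mul, ← mul_assoc, hε,
    neg_mul]

end GlueingDatum

theorem Fin.exists_perm_apply_zero_one_three :
    ∀ a b k : Fin 4, a ≠ b → a ≠ k → b ≠ k → ∃ π : Perm (Fin 4), π 0 = a ∧ π 1 = b ∧ π 3 = k := by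
  decide

theorem Fin.exists_ne_and_ne : ∀ a b : Fin 4, ∃ k, a ≠ k ∧ b ≠ k := by
  decide

theorem Fin.perm_eq_one_or_swap_of_fix_zero_one :
    ∀ σ : Perm (Fin 4), σ 0 = 0 → σ 1 = 1 → σ = 1 ∨ σ = swap 2 3 := by
  decide

namespace GlueingDatum

theorem dir_of_invariant (D : GlueingDatum 3) (O : D.Flag → Prop)
    (hcross : ∀ x, O (D.crossPerm x) ↔ O x) (hswap₂₃ : ∀ x, O (D.reorder (swap 2 3) x) ↔ O x)
    (hswap₀₁ : ∀ x, O (D.reorder (swap 0 1) x) ↔ ¬O x) : Dir D := by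
  have hO (i : D.I) (π π' : Perm (Fin 4)) (h₀ : π' 0 = π 0) (h₁ : π' 1 = π 1) :
      O (i, π') ↔ O (i, π) := by
    rcases Fin.perm_eq_one_or_swap_of_fix_zero_one (π⁻¹ * π')
      (by simp [h₀]) (by simp [h₁]) with h | h
    · rw [inv_mul_eq_one.mp h]
    · rw [eq_mul_of_inv_mul_eq h]
      exact hswap₂₃ (i, π)
  have ho (i : D.I) (π : Perm (Fin 4)) :
      (∃ π' : Perm (Fin 4), π' 0 = π 0 ∧ π' 1 = π 1 ∧ O (i, π')) ↔ O (i, π) :=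
    ⟨fun ⟨π', h₀, h₁, h⟩ => (hO i π π' h₀ h₁).mp h, fun h => ⟨π, rfl, rfl, h⟩⟩
  refine ⟨fun i a b => ∃ π : Perm (Fin 4), π 0 = a ∧ π 1 = b ∧ O (i, π), ?_, ?_⟩
  · intro i a b hab
    dsimp only
    obtain ⟨k, hak, hbk⟩ := Fin.exists_ne_and_ne a b
    obtain ⟨π, rfl, rfl, -⟩ := Fin.exists_perm_apply_zero_one_three _ _ k hab hak hbk
    have hrev := ho i (π * swap 0 1)
    simp only [Perm.mul_apply, swap_apply_left, swap_apply_right] at hrev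
    refine xor_iff_not_iff'.mpr ?_
    rw [ho, hrev, ← hswap₀₁ (i, π)]
    rfl
  · intro i k a b hak hbk hab
    dsimp only
    obtain ⟨π, rfl, rfl, rfl⟩ := Fin.exists_perm_apply_zero_one_three _ _ _ hab hak hbk
    rw [ho, ← hcross (i, π)]
    exact (ho _ (D.glue (i, π 3) * π)).symm

end GlueingDatum

/-- Proposition: in dimension 3, condition Ori (the tetrahedra can be oriented so that
all face-pairings reverse the induced orientation) implies condition Dir (the edges can
be coherently directed). -/
theorem ori_implies_dir_dim3 (D : GlueingDatum 3) (h : Ori D) : Dir D := by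
  obtain ⟨ε, hε⟩ := h
  have hswap : (swap 0 1 : Perm (Fin 4)) (Fin.last 3) = Fin.last 3 := by decide
  obtain ⟨O, hcross, hswap₂₃, hswap₀₁⟩ := exists_invariant_of_closure_pair
    D.crossPerm_mul_self (D.reorder_swap_mul_self 2 3) (D.reorder_swap_mul_self 0 1)
    (D.commute_reorder_crossPerm hswap)
    (D.commute_reorder
      (show (swap 0 1 : Perm (Fin 4)) * swap 2 3 = swap 2 3 * swap 0 1 by decide))
    (D.orientationSign ε) (D.orientationSign_crossPerm (D.mul_sign_glue_eq_neg hε))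
    (D.orientationSign_reorder_swap ε (by decide)) (D.orientationSign_reorder_swap ε (by decide))
    (D.reorder_ne_crossPerm hswap) (D.reorder_ne_reorder (by decide))
  exact D.dir_of_invariant O hcross hswap₂₃ hswap₀₁
end
end
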